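/- arXiv:2103.08807 — 3 statements merged into one kernel-verified Lean document; each statement's English description precedes it below -/
import Mathlib

section
/- Let R be a commutative ring. Then fPD(R) = 0 if and only if R is a DQ ring, i.e., every finitely generated proper ideal of R fails to be semi-regular (equivalently: every finitely generated ideal I with Hom_R(R/I, R) = 0 equals R). -/
universe u

open CategoryTheory

section Defs
variable (R : Type u) [CommRing R]

/-- `M` has projective dimension at most `n` over `R`,
i.e. there is a projective resolution `0 → P_n → ... → P_0 → M → 0`. -/
def pdLE : ℕ → ∀ (M : Type u) [AddCommGroup M] [Module R M], Prop
  | 0, M, _, _ => Module.Projective R M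
  | n+1, M, _, _ => ∃ (P : Type u) (_ : AddCommGroup P) (_ : Module R P)
      (f : P →ₗ[R] M), Module.Projective R P ∧ Function.Surjective f ∧
      pdLE n (LinearMap.ker f)

/-- `M` has a resolution of length `≤ n` by finitely generated projective modules. -/
def fgpdLE : ℕ → ∀ (M : Type u) [AddCommGroup M] [Module R M], Prop
  | 0, M, _, _ => Module.Finite R M ∧ Module.Projective R M
  | n+1, M, _, _ => ∃ (P : Type u) (_ : AddCommGroup P) (_ : Module R P)
      (f : P →ₗ[R] M), Module.Finite R P ∧ Module.Projective R P ∧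
      Function.Surjective f ∧ fgpdLE n (LinearMap.ker f)

/-- The small finitistic dimension of `R` is at most `n`: every module with a finite
resolution by finitely generated projective modules has projective dimension `≤ n`. -/
def fPDLE (n : ℕ) : Prop :=
  ∀ (M : Type u) [AddCommGroup M] [Module R M], (∃ k, fgpdLE R k M) → pdLE R n M

/-- The small finitistic dimension `fPD R`: the supremum of the projective dimensions of
the modules admitting a finite resolution by finitely generated projective modules,
expressed as the least `n` bounding all such projective dimensions (or `⊤`). -/
noncomputable def fPD : ℕ∞ := ⨅ (n : ℕ) (_ : fPDLE R n), (n : ℕ∞)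

/-- `Ext^i_R(R/I, R) = 0`. -/
noncomputable def extVanish (I : Ideal R) (i : ℕ) : Prop :=
  Subsingleton (((_root_.Ext.{u} R (ModuleCat.{u} R) i).obj
    (Opposite.op (ModuleCat.of R (R ⧸ I)))).obj (ModuleCat.of R R))

/-- The grade of `I` on `R`: the least `i` with `Ext^i_R(R/I,R) ≠ 0` (and `⊤` if none). -/
noncomputable def gradeE (I : Ideal R) : ℕ∞ :=
  ⨅ (i : ℕ) (_ : ¬ extVanish R I i), (i : ℕ∞)

end Defs

namespace Stmt6Aux

variable {R : Type u} [CommRing R]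

/-- If `Hom(R/I, R)` is trivial then the annihilator of `I` is zero. -/
lemma ann_eq_zero_of_subsingleton (I : Ideal R) (h : Subsingleton ((R ⧸ I) →ₗ[R] R))
    {r : R} (hr : ∀ a ∈ I, a * r = 0) : r = 0 := by
  have hI : I ≤ LinearMap.ker (LinearMap.toSpanSingleton R R r) := by
    intro a ha
    simpa [LinearMap.mem_ker, LinearMap.toSpanSingleton_apply, smul_eq_mul] using hr a ha
  have h0 : I.liftQ (LinearMap.toSpanSingleton R R r) hI = 0 := Subsingleton.elim _ _
  calc r = LinearMap.toSpanSingleton R R r 1 := by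
          rw [LinearMap.toSpanSingleton_apply, one_smul]
    _ = (I.liftQ (LinearMap.toSpanSingleton R R r) hI) (Submodule.Quotient.mk 1) :=
          (Submodule.liftQ_apply _ _ _).symm
    _ = 0 := by rw [h0]; rfl

/-- Conversely, if the annihilator of `I` is zero then `Hom(R/I, R)` is trivial. -/
lemma subsingleton_of_ann (I : Ideal R) (h : ∀ r : R, (∀ a ∈ I, a * r = 0) → r = 0) :
    Subsingleton ((R ⧸ I) →ₗ[R] R) := by
  have key : ∀ f : (R ⧸ I) →ₗ[R] R, f = 0 := by
    intro f
    have h1 : f (Submodule.Quotient.mk 1) = 0 := by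
      refine h _ fun a ha => ?_
      have : (a • (Submodule.Quotient.mk (1:R) : R ⧸ I)) = 0 := by
        rw [← Submodule.Quotient.mk_smul, smul_eq_mul, mul_one, Submodule.Quotient.mk_eq_zero]
        exact ha
      calc a * f (Submodule.Quotient.mk 1) = f (a • Submodule.Quotient.mk 1) := by
            rw [map_smul, smul_eq_mul]
        _ = 0 := by rw [this, map_zero]
    refine LinearMap.ext fun x => ?_
    obtain ⟨y, rfl⟩ := Submodule.Quotient.mk_surjective I x
    have : (Submodule.Quotient.mk y : R ⧸ I) = y • Submodule.Quotient.mk 1 := by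
      rw [← Submodule.Quotient.mk_smul, smul_eq_mul, mul_one]
    rw [this, map_smul, h1, smul_zero]; rfl
  exact ⟨fun f g => by rw [key f, key g]⟩

lemma fPD_eq_zero_iff : fPD R = 0 ↔ fPDLE R 0 := by
  constructor
  · intro h
    by_contra h0
    have h1 : (1 : ℕ∞) ≤ fPD R := by
      refine le_iInf fun n => le_iInf fun hn => ?_
      match n with
      | 0 => exact absurd hn h0
      | (m+1) => exact_mod_cast Nat.succ_le_succ (Nat.zero_le m)
    rw [h] at h1
    exact absurd h1 (by norm_num)
  · intro h
    refine le_antisymm ?_ zero_le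
    have h1 : fPD R ≤ ((0 : ℕ) : ℕ∞) := iInf_le_of_le 0 (iInf_le_of_le h le_rfl)
    simpa using h1

lemma fgpdLE_finite (k : ℕ) (M : Type u) [AddCommGroup M] [Module R M]
    (h : fgpdLE R k M) : Module.Finite R M := by
  cases k with
  | zero => exact h.1
  | succ k =>
    obtain ⟨P, _, _, f, hPfin, _, hsurj, _⟩ := h
    exact (haveI := hPfin; Module.Finite.of_surjective f hsurj)

/-- McCoy's theorem: if `A` gives an injective linear map, then the ideal of maximal
minors of `A` has zero annihilator. -/
lemma mccoy {a b : ℕ} (A : Matrix (Fin b) (Fin a) R)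
    (hA : ∀ x, A.mulVec x = 0 → x = 0) (r : R)
    (hr : ∀ s : Fin a → Fin b, r * (A.submatrix s id).det = 0) : r = 0 := by
  classical
  by_contra hr0
  set T : Set ℕ :=
    {t | ∃ s : Fin t → Fin b, ∃ c : Fin t → Fin a, r * (A.submatrix s c).det ≠ 0} with hT
  have h0T : 0 ∈ T := ⟨Fin.elim0, Fin.elim0, by
    rw [show ((A.submatrix Fin.elim0 Fin.elim0).det) = 1 from Matrix.det_fin_zero, mul_one]
    exact hr0⟩
  have hinj : ∀ {t : ℕ} {s : Fin t → Fin b} {c : Fin t → Fin a},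
      r * (A.submatrix s c).det ≠ 0 → Function.Injective c := by
    intro t s c h i i' hii'
    by_contra hne
    refine h ?_
    rw [Matrix.det_zero_of_column_eq hne (fun k => by simp [Matrix.submatrix_apply, hii']),
      mul_zero]
  have hbdd : ∀ t ∈ T, t ≤ a := by
    rintro t ⟨s, c, h⟩
    simpa using Fintype.card_le_of_injective c (hinj h)
  have haT : a ∉ T := by
    rintro ⟨s, c, h⟩
    have hc : Function.Injective c := hinj h
    have hcb : Function.Bijective c := Finite.injective_iff_bijective.1 hc
    have hsub : A.submatrix s c = (A.submatrix s id).submatrix id (Equiv.ofBijective c hcb) := by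
      ext i j
      simp [Matrix.submatrix_apply, Equiv.ofBijective_apply]
    rw [hsub, Matrix.det_permute', mul_left_comm, hr s, mul_zero] at h
    exact h rfl
  have hTbdd : BddAbove T := ⟨a, fun t ht => hbdd t ht⟩
  have htT : sSup T ∈ T := Nat.sSup_mem ⟨0, h0T⟩ hTbdd
  set t := sSup T with htdef
  have hta : t ≤ a := hbdd t htT
  have htlt : t < a := lt_of_le_of_ne hta fun h => haT (h ▸ htT)
  have ht1 : ∀ (s' : Fin (t+1) → Fin b) (c' : Fin (t+1) → Fin a),
      r * (A.submatrix s' c').det = 0 := by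
    intro s' c'
    by_contra h
    have hmem : t + 1 ∈ T := ⟨s', c', h⟩
    have := le_csSup hTbdd hmem
    omega
  obtain ⟨s, c, hm⟩ := htT
  have hc : Function.Injective c := hinj hm
  have hcs : ¬ Function.Surjective c := by
    intro hs
    have := Fintype.card_le_of_surjective c hs
    simp only [Fintype.card_fin] at this
    omega
  rw [Function.Surjective] at hcs
  push_neg at hcs
  obtain ⟨j₀, hj₀⟩ := hcs
  set c' : Fin (t+1) → Fin a := Fin.snoc c j₀ with hc'
  have hc'last : c' (Fin.last t) = j₀ := Fin.snoc_last _ _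
  have hc'cast : ∀ i : Fin t, c' (Fin.castSucc i) = c i := fun i => Fin.snoc_castSucc _ _ _
  have hc'inj : Function.Injective c' := by
    intro i i' hii'
    induction i using Fin.lastCases with
    | last =>
      induction i' using Fin.lastCases with
      | last => rfl
      | cast i' => exact absurd ((hc'cast i') ▸ hc'last ▸ hii'.symm) (hj₀ i')
    | cast i =>
      induction i' using Fin.lastCases with
      | last => exact absurd ((hc'cast i) ▸ hc'last ▸ hii') (hj₀ i)
      | cast i' =>
        rw [hc'cast, hc'cast] at hii'
        exact congrArg Fin.castSucc (hc hii')
  set y : Fin (t+1) → R :=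
    fun i => (-1 : R) ^ (t + (i : ℕ)) * r * (A.submatrix s (c' ∘ i.succAbove)).det with hy
  set x : Fin a → R := fun j => ∑ i : Fin (t+1), if c' i = j then y i else 0 with hx
  have hclast : c' ∘ (Fin.last t).succAbove = c := by
    funext i
    simp only [Function.comp_apply, Fin.succAbove_last]
    exact hc'cast i
  have hxj₀ : x j₀ = r * (A.submatrix s c).det := by
    show (∑ i : Fin (t + 1), if c' i = j₀ then y i else 0) = r * (A.submatrix s c).det
    rw [Finset.sum_eq_single (Fin.last t)]
    · rw [if_pos hc'last]
      have h3 : (-1 : R) ^ (t + t) = 1 := by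
        rw [← two_mul, pow_mul]
        norm_num
      simp only [hy]
      rw [hclast]
      simp only [Fin.val_last]
      rw [h3, one_mul]
    · intro i _ hi
      rw [if_neg]
      intro h
      exact hi (hc'inj (h.trans hc'last.symm))
    · intro h
      exact absurd (Finset.mem_univ _) h
  have hx0 : x j₀ ≠ 0 := by rw [hxj₀]; exact hm
  have hAx : A.mulVec x = 0 := by
    funext k
    have step1 : A.mulVec x k = ∑ i : Fin (t+1), A k (c' i) * y i := by
      rw [Matrix.mulVec, dotProduct]
      calc ∑ j, A k j * x j
          = ∑ j, ∑ i : Fin (t+1), if c' i = j then A k j * y i else 0 := by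
            refine Finset.sum_congr rfl fun j _ => ?_
            show A k j * (∑ i : Fin (t + 1), if c' i = j then y i else 0) = _
            rw [Finset.mul_sum]
            refine Finset.sum_congr rfl fun i _ => ?_
            rw [mul_ite, mul_zero]
        _ = ∑ i : Fin (t+1), ∑ j, if c' i = j then A k j * y i else 0 := Finset.sum_comm
        _ = ∑ i : Fin (t+1), A k (c' i) * y i := by
            refine Finset.sum_congr rfl fun i _ => ?_
            rw [Finset.sum_ite_eq Finset.univ (c' i) (fun j => A k j * y i),
              if_pos (Finset.mem_univ _)]
    have hrow : ∀ i : Fin (t+1),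
        (A.submatrix (Fin.snoc s k) c') (Fin.last t) i = A k (c' i) := by
      intro i
      rw [Matrix.submatrix_apply, Fin.snoc_last]
    have hsub2 : ∀ i : Fin (t+1),
        (A.submatrix (Fin.snoc s k) c').submatrix (Fin.last t).succAbove i.succAbove
          = A.submatrix s (c' ∘ i.succAbove) := by
      intro i
      ext p q
      simp only [Matrix.submatrix_apply, Function.comp_apply, Fin.succAbove_last,
        Fin.snoc_castSucc]
    have step2 : ∑ i : Fin (t+1), A k (c' i) * y i
        = r * (A.submatrix (Fin.snoc s k) c').det := by
      rw [Matrix.det_succ_row _ (Fin.last t), Finset.mul_sum]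
      refine Finset.sum_congr rfl fun i _ => ?_
      rw [hrow, hsub2]
      simp only [hy, Fin.val_last]
      ring
    show A.mulVec x k = (0 : Fin b → R) k
    rw [step1, step2, ht1]
    rfl
  exact hx0 (by rw [hA x hAx]; rfl)

/-- If the maximal minors of `A` generate the unit ideal, `A` has a left inverse. -/
lemma matrix_left_inverse {a b : ℕ} (A : Matrix (Fin b) (Fin a) R)
    (h1 : (1 : R) ∈ Ideal.span (Set.range fun s : Fin a → Fin b => (A.submatrix s id).det)) :
    ∃ B : Matrix (Fin a) (Fin b) R, B * A = 1 := by
  classical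
  rw [Ideal.span, Submodule.mem_span_range_iff_exists_fun] at h1
  obtain ⟨cf, hcf⟩ := h1
  refine ⟨∑ s : Fin a → Fin b,
    cf s • ((A.submatrix s id).adjugate * ((1 : Matrix (Fin b) (Fin b) R).submatrix s id)), ?_⟩
  have key : ∀ s : Fin a → Fin b,
      ((1 : Matrix (Fin b) (Fin b) R).submatrix s id) * A = A.submatrix s id := by
    intro s
    ext i j
    rw [Matrix.mul_apply]
    simp only [Matrix.submatrix_apply, id_eq, Matrix.one_apply, ite_mul, one_mul, zero_mul]
    rw [Finset.sum_ite_eq Finset.univ (s i) (fun k => A k j), if_pos (Finset.mem_univ _)]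
  rw [Matrix.sum_mul]
  have step : ∀ s : Fin a → Fin b,
      (cf s • ((A.submatrix s id).adjugate * ((1 : Matrix (Fin b) (Fin b) R).submatrix s id))) * A
        = (cf s * (A.submatrix s id).det) • (1 : Matrix (Fin a) (Fin a) R) := by
    intro s
    rw [Matrix.smul_mul, Matrix.mul_assoc, key s, Matrix.adjugate_mul, smul_smul]
  rw [Finset.sum_congr rfl fun s _ => step s, ← Finset.sum_smul]
  simp only [smul_eq_mul] at hcf
  rw [hcf, one_smul]

/-- Over a DQ ring, any injective map between finite free modules splits. -/
lemma split_of_free (hDQ : ∀ I : Ideal R, I.FG → Subsingleton ((R ⧸ I) →ₗ[R] R) → I = ⊤)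
    {F₁ F₂ : Type u} [AddCommGroup F₁] [Module R F₁] [AddCommGroup F₂] [Module R F₂]
    [Module.Free R F₁] [Module.Finite R F₁] [Module.Free R F₂] [Module.Finite R F₂]
    (φ : F₁ →ₗ[R] F₂) (hφ : Function.Injective φ) :
    ∃ ψ : F₂ →ₗ[R] F₁, ψ.comp φ = LinearMap.id := by
  classical
  let ι₁ := Module.Free.ChooseBasisIndex R F₁
  let ι₂ := Module.Free.ChooseBasisIndex R F₂
  let e₁ : F₁ ≃ₗ[R] (Fin (Fintype.card ι₁) → R) :=
    (Module.Free.chooseBasis R F₁).equivFun.trans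
      (LinearEquiv.piCongrLeft' R (fun _ => R) (Fintype.equivFin ι₁))
  let e₂ : F₂ ≃ₗ[R] (Fin (Fintype.card ι₂) → R) :=
    (Module.Free.chooseBasis R F₂).equivFun.trans
      (LinearEquiv.piCongrLeft' R (fun _ => R) (Fintype.equivFin ι₂))
  set φ' : (Fin (Fintype.card ι₁) → R) →ₗ[R] (Fin (Fintype.card ι₂) → R) :=
    (e₂.toLinearMap.comp φ).comp e₁.symm.toLinearMap with hφ'
  set A := LinearMap.toMatrix' φ' with hA
  have hmv : ∀ v, A.mulVec v = φ' v := by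
    intro v
    rw [← Matrix.toLin'_apply, hA, Matrix.toLin'_toMatrix']
  have hinj : ∀ x, A.mulVec x = 0 → x = 0 := by
    intro x hx
    rw [hmv] at hx
    have h1 : e₂ (φ (e₁.symm x)) = 0 := hx
    have h2 : φ (e₁.symm x) = 0 := by
      apply e₂.injective
      rw [h1, map_zero]
    have h3 : e₁.symm x = 0 := hφ (by rw [h2, map_zero])
    have := congrArg e₁ h3
    rwa [e₁.apply_symm_apply, map_zero] at this
  set D := Ideal.span (Set.range fun s : Fin (Fintype.card ι₁) → Fin (Fintype.card ι₂) =>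
    (A.submatrix s id).det) with hD
  have hfg : D.FG := Submodule.fg_span (Set.finite_range _)
  have hsub : Subsingleton ((R ⧸ D) →ₗ[R] R) := by
    refine subsingleton_of_ann D fun r hrr => mccoy A hinj r fun s => ?_
    have := hrr _ (Ideal.subset_span ⟨s, rfl⟩)
    rwa [mul_comm] at this
  have hDT := hDQ D hfg hsub
  have h1 : (1 : R) ∈ Ideal.span (Set.range fun s : Fin (Fintype.card ι₁) → Fin (Fintype.card ι₂) =>
      (A.submatrix s id).det) := by
    rw [← hD, hDT]
    trivial
  obtain ⟨B, hB⟩ := matrix_left_inverse A h1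
  refine ⟨e₁.symm.toLinearMap.comp (B.mulVecLin.comp e₂.toLinearMap), ?_⟩
  apply LinearMap.ext
  intro k
  show e₁.symm (B.mulVec (e₂ (φ k))) = k
  have h2 : e₂ (φ k) = A.mulVec (e₁ k) := by
    rw [hmv]
    show _ = e₂ (φ (e₁.symm (e₁ k)))
    rw [e₁.symm_apply_apply]
  rw [h2, Matrix.mulVec_mulVec, hB, Matrix.one_mulVec, e₁.symm_apply_apply]

lemma exists_retract (M : Type u) [AddCommGroup M] [Module R M]
    [Module.Finite R M] [Module.Projective R M] :
    ∃ (n : ℕ) (g : (Fin n → R) →ₗ[R] M) (i : M →ₗ[R] (Fin n → R)),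
      g.comp i = LinearMap.id := by
  obtain ⟨n, g, hg⟩ := Module.Finite.exists_fin' R M
  obtain ⟨i, hi⟩ := Module.projective_lifting_property g LinearMap.id hg
  exact ⟨n, g, i, hi⟩

/-- Over a DQ ring, any injective map between finite projective modules splits. -/
lemma split_of_proj (hDQ : ∀ I : Ideal R, I.FG → Subsingleton ((R ⧸ I) →ₗ[R] R) → I = ⊤)
    {K P : Type u} [AddCommGroup K] [Module R K] [AddCommGroup P] [Module R P]
    [Module.Finite R K] [Module.Projective R K] [Module.Finite R P] [Module.Projective R P]
    (φ : K →ₗ[R] P) (hφ : Function.Injective φ) :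
    ∃ ψ : P →ₗ[R] K, ψ.comp φ = LinearMap.id := by
  obtain ⟨n, gK, iK, hK⟩ := exists_retract (R := R) K
  obtain ⟨m, gP, iP, hP⟩ := exists_retract (R := R) P
  have hiP : Function.Injective iP :=
    Function.LeftInverse.injective (g := gP) fun x => LinearMap.congr_fun hP x
  have hiK : ∀ x, gK (iK x) = x := fun x => LinearMap.congr_fun hK x
  set Φ : (Fin n → R) →ₗ[R] (Fin m → R) × (Fin n → R) :=
    LinearMap.prod ((iP.comp φ).comp gK) (LinearMap.id - iK.comp gK) with hΦdef
  have hΦinj : Function.Injective Φ := by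
    rw [← LinearMap.ker_eq_bot]
    refine (Submodule.eq_bot_iff _).2 fun u hu => ?_
    rw [LinearMap.mem_ker] at hu
    have h1 : iP (φ (gK u)) = 0 := congrArg Prod.fst hu
    have h2 : u - iK (gK u) = 0 := congrArg Prod.snd hu
    have h3 : gK u = 0 := hφ (hiP (by rw [h1, map_zero, map_zero]))
    have h4 : u = iK (gK u) := by rwa [sub_eq_zero] at h2
    rw [h4, h3, map_zero]
  obtain ⟨Ψ, hΨ⟩ := split_of_free hDQ Φ hΦinj
  refine ⟨gK.comp (Ψ.comp (LinearMap.prod iP 0)), ?_⟩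
  apply LinearMap.ext
  intro k
  show gK (Ψ (iP (φ k), (0 : Fin n → R))) = k
  have h1 : Φ (iK k) = (iP (φ k), (0 : Fin n → R)) := by
    have hk : gK (iK k) = k := hiK k
    show (iP (φ (gK (iK k))), iK k - iK (gK (iK k))) = _
    rw [hk, sub_self]
  have h2 : Ψ (Φ (iK k)) = iK k := LinearMap.congr_fun hΨ (iK k)
  rw [← h1, h2, hiK]

lemma projective_of_fgpd (hDQ : ∀ I : Ideal R, I.FG → Subsingleton ((R ⧸ I) →ₗ[R] R) → I = ⊤) :
    ∀ (k : ℕ) (M : Type u) [AddCommGroup M] [Module R M],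
      fgpdLE R k M → Module.Projective R M := by
  intro k
  induction k with
  | zero => intro M _ _ h; exact h.2
  | succ k ih =>
    intro M _ _ h
    obtain ⟨P, iP1, iP2, f, hPfin, hPproj, hfsurj, hker⟩ := h
    haveI := hPfin
    haveI := hPproj
    haveI hKproj : Module.Projective R (LinearMap.ker f) := ih _ hker
    haveI hKfin : Module.Finite R (LinearMap.ker f) := fgpdLE_finite k _ hker
    obtain ⟨ψ, hψ⟩ := split_of_proj hDQ (LinearMap.ker f).subtype (Submodule.injective_subtype _)
    set σ : P →ₗ[R] P := LinearMap.id - (LinearMap.ker f).subtype.comp ψ with hσdef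
    have hker2 : LinearMap.ker f ≤ LinearMap.ker σ := by
      intro p hp
      rw [LinearMap.mem_ker]
      have h4 : ψ p = ⟨p, hp⟩ := by
        have := LinearMap.congr_fun hψ (⟨p, hp⟩ : LinearMap.ker f)
        exact this
      show p - (LinearMap.ker f).subtype (ψ p) = 0
      rw [h4]
      exact sub_self p
    have hfσ : ∀ p, f (σ p) = f p := by
      intro p
      show f (p - (LinearMap.ker f).subtype (ψ p)) = f p
      rw [map_sub]
      have : f ((LinearMap.ker f).subtype (ψ p)) = 0 := (ψ p).2
      rw [this, sub_zero]
    set e := f.quotKerEquivOfSurjective hfsurj with hedef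
    set τ : M →ₗ[R] P := ((LinearMap.ker f).liftQ σ hker2).comp e.symm.toLinearMap with hτdef
    refine Module.Projective.of_split τ f ?_
    apply LinearMap.ext
    intro m
    obtain ⟨p, rfl⟩ := hfsurj m
    have h5 : e (Submodule.Quotient.mk p) = f p := by
      rw [hedef]
      rfl
    have h6 : e.symm (f p) = Submodule.Quotient.mk p := by
      rw [LinearEquiv.symm_apply_eq, h5]
    show f (τ (f p)) = f p
    rw [hτdef]
    simp only [LinearMap.comp_apply, LinearEquiv.coe_coe]
    rw [h6, Submodule.liftQ_apply, hfσ]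

end Stmt6Aux

set_option maxHeartbeats 1000000 in
/-- `fPD R = 0` iff `R` is a DQ ring: every finitely generated ideal `I` with
`Hom_R(R/I, R) = 0` equals `R`. -/
theorem stmt6 (R : Type u) [CommRing R] :
    fPD R = 0 ↔ ∀ I : Ideal R, I.FG → Subsingleton ((R ⧸ I) →ₗ[R] R) → I = ⊤ := by
  rw [Stmt6Aux.fPD_eq_zero_iff]
  constructor
  · intro h0 I hFG hsub
    classical
    obtain ⟨n, v, hv⟩ := Submodule.fg_iff_exists_fin_generating_family.mp hFG
    set φ : R →ₗ[R] (Fin n → R) := LinearMap.pi (fun i => v i • LinearMap.id) with hφdef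
    have hφapp : ∀ r i, φ r i = v i * r := fun r i => rfl
    have hφinj : Function.Injective φ := by
      rw [← LinearMap.ker_eq_bot]
      refine (Submodule.eq_bot_iff _).2 fun r hr => ?_
      rw [LinearMap.mem_ker] at hr
      have hgen : Set.range v ⊆ ↑(LinearMap.ker (LinearMap.toSpanSingleton R R r)) := by
        rintro _ ⟨i, rfl⟩
        have : v i * r = 0 := by rw [← hφapp r i, hr]; rfl
        simpa [LinearMap.mem_ker, LinearMap.toSpanSingleton_apply, smul_eq_mul] using this
      have hIker : I ≤ LinearMap.ker (LinearMap.toSpanSingleton R R r) := by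
        rw [← hv]
        exact Submodule.span_le.2 hgen
      refine Stmt6Aux.ann_eq_zero_of_subsingleton I hsub fun a ha => ?_
      have := hIker ha
      simpa [LinearMap.mem_ker, LinearMap.toSpanSingleton_apply, smul_eq_mul] using this
    set N := LinearMap.range φ with hNdef
    set M := (Fin n → R) ⧸ N with hMdef
    have hkerfin : Module.Finite R (LinearMap.ker N.mkQ) := by
      refine Module.Finite.equiv
        ((LinearEquiv.ofInjective φ hφinj).trans (LinearEquiv.ofEq _ _ ?_))
      rw [Submodule.ker_mkQ]
    have hkerproj : Module.Projective R (LinearMap.ker N.mkQ) := by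
      refine Module.Projective.of_equiv
        ((LinearEquiv.ofInjective φ hφinj).trans (LinearEquiv.ofEq _ _ ?_))
      rw [Submodule.ker_mkQ]
    have hfg1 : fgpdLE R 1 M :=
      ⟨Fin n → R, inferInstance, inferInstance, N.mkQ, inferInstance, inferInstance,
        Submodule.mkQ_surjective N, hkerfin, hkerproj⟩
    have hMproj : Module.Projective R M := h0 M ⟨1, hfg1⟩
    obtain ⟨hsec, hcomp⟩ :=
      Module.projective_lifting_property N.mkQ LinearMap.id (Submodule.mkQ_surjective N)
    set σ : (Fin n → R) →ₗ[R] (Fin n → R) := LinearMap.id - hsec.comp N.mkQ with hσdef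
    have hσmem : ∀ w, σ w ∈ N := by
      intro w
      have : N.mkQ (σ w) = 0 := by
        show N.mkQ (w - hsec (N.mkQ w)) = 0
        rw [map_sub]
        have h2 : N.mkQ (hsec (N.mkQ w)) = N.mkQ w := LinearMap.congr_fun hcomp (N.mkQ w)
        rw [h2, sub_self]
      rwa [← Submodule.ker_mkQ N, LinearMap.mem_ker]
    choose g hg using fun i => LinearMap.mem_range.mp (hσmem ((Pi.single i (1:R) : Fin n → R)))
    have hφ1 : σ (φ 1) = φ 1 := by
      show φ 1 - hsec (N.mkQ (φ 1)) = φ 1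
      have : N.mkQ (φ 1) = 0 := by
        rw [Submodule.mkQ_apply, Submodule.Quotient.mk_eq_zero]
        exact ⟨1, rfl⟩
      rw [this, map_zero, sub_zero]
    have hdecomp : φ 1 = ∑ i, v i • (Pi.single i (1:R) : Fin n → R) := by
      funext j
      rw [hφapp, mul_one]
      rw [Finset.sum_apply]
      have : ∀ i, (v i • (Pi.single i (1:R) : Fin n → R)) j = if j = i then v i else 0 := by
        intro i
        rw [Pi.smul_apply, Pi.single_apply]
        simp only [smul_eq_mul, mul_ite, mul_one, mul_zero]
      rw [Finset.sum_congr rfl fun i _ => this i]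
      rw [Finset.sum_ite_eq Finset.univ j v, if_pos (Finset.mem_univ _)]
    have key : φ (∑ i, v i • g i) = φ 1 := by
      rw [map_sum]
      calc ∑ i, φ (v i • g i) = ∑ i, σ (v i • (Pi.single i (1:R) : Fin n → R)) := by
            refine Finset.sum_congr rfl fun i _ => ?_
            rw [map_smul, hg i, map_smul]
        _ = σ (∑ i, v i • (Pi.single i (1:R) : Fin n → R)) := (map_sum σ _ _).symm
        _ = φ 1 := by rw [← hdecomp, hφ1]
    have h1 : (1 : R) = ∑ i, v i • g i := (hφinj key).symm
    have hmem : (1 : R) ∈ I := by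
      rw [h1, ← hv]
      refine Submodule.sum_mem _ fun i _ => ?_
      have hcomm : v i • g i = g i • v i := by
        rw [smul_eq_mul, smul_eq_mul, mul_comm]
      rw [hcomm]
      exact Submodule.smul_mem _ _ (Submodule.subset_span ⟨i, rfl⟩)
    exact (Ideal.eq_top_iff_one I).2 hmem
  · intro hDQ M _ _ hk
    obtain ⟨k, hfg⟩ := hk
    exact Stmt6Aux.projective_of_fgpd hDQ k M hfg
end

section
/- Let R be a commutative ring and J a finitely generated GV-ideal. If J is flat as an R-module, then J = R. -/
universe u

open CategoryTheory

/-- `J` is a Glaz–Vasconcelos ideal: finitely generated with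
`Hom_R(R/J,R) = Ext^1_R(R/J,R) = 0`. -/
noncomputable def IsGV (R : Type u) [CommRing R] (J : Ideal R) : Prop :=
  J.FG ∧ Subsingleton ((R ⧸ J) →ₗ[R] R) ∧ extVanish R J 1

section Aux
open Finsupp
variable {R : Type u} [CommRing R]

lemma ann_zero (J : Ideal R) (hsub : Subsingleton ((R ⧸ J) →ₗ[R] R))
    (s : R) (hs : ∀ u ∈ J, s * u = 0) : s = 0 := by
  have hle : J ≤ LinearMap.ker (s • (LinearMap.id : R →ₗ[R] R)) := by
    intro u hu
    simpa [smul_eq_mul] using hs u hu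
  have h0 : Submodule.liftQ J (s • (LinearMap.id : R →ₗ[R] R)) hle = 0 := Subsingleton.elim _ _
  have h1 := LinearMap.congr_fun h0 (Submodule.Quotient.mk (1 : R))
  rw [Submodule.liftQ_apply] at h1
  simpa using h1

lemma linmap_finsupp_expand {ι : Type*} [Fintype ι] {M : Type*} [AddCommGroup M] [Module R M]
    (g : (ι →₀ R) →ₗ[R] M) (w : ι →₀ R) : g w = ∑ i, w i • g (Finsupp.single i 1) := by
  conv_lhs => rw [← Finsupp.sum_single w]
  rw [map_finsuppSum, Finsupp.sum_fintype _ _ (by simp)]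
  refine Finset.sum_congr rfl fun i _ => ?_
  rw [← Finsupp.smul_single_one, map_smul]

lemma main_alg (J : Ideal R) (hfg : J.FG)
    (hann : ∀ s : R, (∀ u ∈ J, s * u = 0) → s = 0)
    (hext : ∀ f : J →ₗ[R] R, ∃ b : R, ∀ u : J, f u = b * (u : R))
    (hflat : Module.Flat R J) : J = ⊤ := by
  classical
  obtain ⟨s, hsJ⟩ := hfg
  set n := s.card with hn
  set x : Fin n → R := fun i => (s.equivFin.symm i : R) with hx
  have hxr : Set.range x = (s : Set R) := by
    ext u
    constructor
    · rintro ⟨i, rfl⟩; exact (s.equivFin.symm i).2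
    · intro hu; exact ⟨s.equivFin ⟨u, hu⟩, by simp [hx]⟩
  have hs' : Submodule.span R (Set.range x) = J := by
    rw [hxr, ← hsJ]
  have hxJ : ∀ i, x i ∈ J := fun i => hs' ▸ Submodule.subset_span ⟨i, rfl⟩
  set xJ : Fin n → J := fun i => ⟨x i, hxJ i⟩ with hxJdef
  set π : (Fin n →₀ R) →ₗ[R] J := Finsupp.linearCombination R xJ with hπ
  have hπcoe : ∀ w : Fin n →₀ R, ((π w : R)) = ∑ i, w i * x i := by
    intro w
    rw [hπ, Finsupp.linearCombination_apply, Finsupp.sum_fintype _ _ (by simp)]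
    push_cast
    simp [hxJdef, smul_eq_mul]
  have hπsingle : ∀ i, π (Finsupp.single i 1) = xJ i := by
    intro i; simp [hπ]
  have surjπ : Function.Surjective π := by
    rw [← LinearMap.range_eq_top, hπ, Finsupp.range_linearCombination]
    apply Submodule.map_injective_of_injective J.injective_subtype
    rw [Submodule.map_span, Submodule.map_subtype_top]
    have himg : ⇑J.subtype '' Set.range xJ = Set.range x := by
      rw [← Set.range_comp]; rfl
    rw [himg, hs']
  -- Koszul relations
  set kvec : Fin n × Fin n → (Fin n →₀ R) :=
    fun p => x p.2 • Finsupp.single p.1 1 - x p.1 • Finsupp.single p.2 1 with hkvec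
  set kos : ((Fin n × Fin n) →₀ R) →ₗ[R] (Fin n →₀ R) := Finsupp.linearCombination R kvec
    with hkos
  have hcomp : π ∘ₗ kos = 0 := by
    apply Finsupp.lhom_ext
    intro p c
    apply Subtype.ext
    simp only [LinearMap.comp_apply, hkos, Finsupp.linearCombination_single, LinearMap.zero_apply,
      map_smul, hkvec]
    simp only [map_sub, map_smul, hπsingle]
    push_cast [hxJdef]
    simp only [smul_eq_mul]
    ring
  obtain ⟨κ, hκ, a, y, hya, hak⟩ : ∃ (κ : Type) (_ : Fintype κ)
      (a : (Fin n →₀ R) →ₗ[R] (κ →₀ R)) (y : (κ →₀ R) →ₗ[R] ↥J), π = y ∘ₗ a ∧ a ∘ₗ kos = 0 := by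
    obtain ⟨k, a, y, hya, hak⟩ :=
      Module.Flat.exists_factorization_of_comp_eq_zero_of_free (M := ↥J) (f := kos) (x := π) hcomp
    exact ⟨Fin k, inferInstance, a, y, hya, hak⟩
  haveI := hκ
  set B : Fin n → (κ →₀ R) := fun i => a (Finsupp.single i 1) with hB
  set z : κ → ↥J := fun j => y (Finsupp.single j 1) with hz
  have hzmem : ∀ j : κ, (z j : R) ∈ Submodule.span R (Set.range x) := by
    rw [hs']; exact fun j => (z j).2
  choose D hD using fun j => (Submodule.mem_span_range_iff_exists_fun R).mp (hzmem j)
  set C : Fin n → Fin n → R := fun i l => ∑ j, B i j * D j l with hC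
  -- (F1) : x i = ∑ l, C i l * x l
  have hF1 : ∀ i, x i = ∑ l, C i l * x l := by
    intro i
    have h1 : (xJ i : R) = ((y (B i) : R)) := by
      rw [← hπsingle i, hya]; rfl
    have h2 : ((y (B i) : R)) = ∑ j, B i j * (z j : R) := by
      rw [linmap_finsupp_expand y (B i)]
      push_cast
      refine Finset.sum_congr rfl fun j _ => ?_
      rw [smul_eq_mul]
    calc x i = ∑ j, B i j * (z j : R) := by rw [← h2, ← h1]
      _ = ∑ j, ∑ l, B i j * (D j l * x l) := by
          refine Finset.sum_congr rfl fun j _ => ?_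
          rw [← hD j, Finset.mul_sum]
          simp [smul_eq_mul]
      _ = ∑ l, ∑ j, B i j * (D j l * x l) := Finset.sum_comm
      _ = ∑ l, C i l * x l := by
          refine Finset.sum_congr rfl fun l _ => ?_
          rw [hC]; rw [Finset.sum_mul]
          refine Finset.sum_congr rfl fun j _ => ?_
          ring
  -- (F2) : x k * B i j = x i * B k j
  have hF2 : ∀ i k (j : κ), x k * B i j = x i * B k j := by
    intro i k j
    have h0 := LinearMap.congr_fun hak (Finsupp.single ((i, k) : Fin n × Fin n) 1)
    rw [LinearMap.comp_apply, LinearMap.zero_apply] at h0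
    have hks : kos (Finsupp.single ((i, k) : Fin n × Fin n) 1) = kvec (i, k) := by
      rw [hkos, Finsupp.linearCombination_single, one_smul]
    rw [hks] at h0
    have hkv : kvec (i, k) = x k • Finsupp.single i 1 - x i • Finsupp.single k 1 := by
      rw [hkvec]
    rw [hkv, map_sub, map_smul, map_smul, sub_eq_zero] at h0
    have h2 := DFunLike.congr_fun h0 j
    simpa [smul_eq_mul, hB] using h2
  -- (F3) : x k * C i l = x i * C k l
  have hF3 : ∀ i k l, x k * C i l = x i * C k l := by
    intro i k l
    rw [hC, Finset.mul_sum, Finset.mul_sum]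
    refine Finset.sum_congr rfl fun j _ => ?_
    rw [← mul_assoc, ← mul_assoc, hF2 i k j]
  -- span-killing helper
  have spankill : ∀ s0 : R, (∀ k, s0 * x k = 0) → s0 = 0 := by
    intro s0 hgen
    apply hann
    intro u hu
    have hle : J ≤ LinearMap.ker (s0 • (LinearMap.id : R →ₗ[R] R)) := by
      rw [← hs', Submodule.span_le]
      rintro _ ⟨k, rfl⟩
      simp only [SetLike.mem_coe, LinearMap.mem_ker, LinearMap.smul_apply, LinearMap.id_apply,
        smul_eq_mul]
      exact hgen k
    simpa [smul_eq_mul] using hle hu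
  -- the maps σ l
  set σ : Fin n → ((Fin n →₀ R) →ₗ[R] R) := fun l => Finsupp.linearCombination R (fun i => C i l)
    with hσdef
  have hσ : ∀ l w, σ l w = ∑ i, w i * C i l := by
    intro l w
    have h9 : σ l w = (Finsupp.linearCombination R fun i => C i l) w := by rw [hσdef]
    rw [h9, linmap_finsupp_expand (Finsupp.linearCombination R fun i => C i l) w]
    refine Finset.sum_congr rfl fun i _ => ?_
    simp [smul_eq_mul]
  have hker : ∀ l (w : Fin n →₀ R), π w = 0 → σ l w = 0 := by
    intro l w hw
    apply spankill
    intro k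
    have hc : σ l w * x k = C k l * ((π w : R)) := by
      rw [hσ, hπcoe, Finset.sum_mul, Finset.mul_sum]
      refine Finset.sum_congr rfl fun i _ => ?_
      have h4 : C i l * x k = x i * C k l := by rw [← hF3 i k l]; ring
      calc w i * C i l * x k = w i * (C i l * x k) := by ring
        _ = w i * (x i * C k l) := by rw [h4]
        _ = C k l * (w i * x i) := by ring
    rw [hc, hw]
    simp
  -- the maps ψ l on J
  set sec : ↥J → (Fin n →₀ R) := Function.surjInv surjπ with hsecdef
  have hsec : ∀ u, π (sec u) = u := fun u => Function.surjInv_eq surjπ u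
  have key : ∀ l (w w' : Fin n →₀ R), π w = π w' → σ l w = σ l w' := by
    intro l w w' h
    have h5 := hker l (w - w') (by rw [map_sub, h, sub_self])
    rw [map_sub, sub_eq_zero] at h5
    exact h5
  set ψ : Fin n → (↥J →ₗ[R] R) := fun l =>
    { toFun := fun u => σ l (sec u)
      map_add' := fun u v => by
        rw [← map_add]
        exact key l _ _ (by rw [hsec, map_add, hsec, hsec])
      map_smul' := fun c u => by
        simp only [RingHom.id_apply]
        rw [← map_smul]
        exact key l _ _ (by rw [hsec, map_smul, hsec]) } with hψdef
  have hψ : ∀ l w, ψ l (π w) = σ l w := fun l w => key l _ _ (hsec _)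
  choose b hb using fun l => hext (ψ l)
  have hCb : ∀ i l, C i l = b l * x i := by
    intro i l
    have h6 : σ l (Finsupp.single i 1) = C i l := by
      rw [hσ]
      simp [Finsupp.single_apply, Finset.sum_ite_eq']
    have h8 : ψ l (xJ i) = C i l := by
      rw [← hπsingle i, hψ]
      exact h6
    have h7 := hb l (xJ i)
    rw [h8] at h7
    exact h7
  -- conclusion
  set t : R := ∑ l, b l * x l with htdef
  have ht : t ∈ J := Ideal.sum_mem _ fun l _ => J.mul_mem_left _ (hxJ l)
  have h1t : (1 : R) - t = 0 := by
    apply spankill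
    intro i
    have h8 : t * x i = ∑ l, C i l * x l := by
      rw [htdef, Finset.sum_mul]
      refine Finset.sum_congr rfl fun l _ => ?_
      rw [hCb i l]; ring
    rw [sub_mul, one_mul, h8, ← hF1 i, sub_self]
  rw [Ideal.eq_top_iff_one]
  rw [show (1 : R) = t from sub_eq_zero.mp h1t]
  exact ht
lemma hom_extends (J : Ideal R) (h1 : extVanish R J 1)
    (f : J →ₗ[R] R) : ∃ b : R, ∀ u : J, f u = b * (u : R) := by
  classical
  set M : ModuleCat.{u} R := ModuleCat.of R (R ⧸ J) with hM
  set Y : ModuleCat.{u} R := ModuleCat.of R R with hY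
  obtain ⟨P⟩ : Nonempty (ProjectiveResolution M) := HasProjectiveResolution.out
  set P0 := P.complex.X 0
  set P1 := P.complex.X 1
  set d10 : P1 ⟶ P0 := P.complex.d 1 0
  set d21 : P.complex.X 2 ⟶ P1 := P.complex.d 2 1
  let εM : P0 ⟶ M := P.π.f 0
  haveI hepi : Epi εM := inferInstanceAs (Epi (P.π.f 0))
  let mkQh : Y ⟶ M := ModuleCat.ofHom J.mkQ
  haveI : Epi mkQh := (ModuleCat.epi_iff_surjective _).mpr J.mkQ_surjective
  haveI : Projective Y := ModuleCat.projective_of_free (Module.Basis.singleton PUnit.{u+1} R)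
  -- the two comparison maps
  let α : P0 ⟶ Y := Projective.factorThru εM mkQh
  have hα : α ≫ mkQh = εM := Projective.factorThru_comp _ _
  let β : Y ⟶ P0 := Projective.factorThru mkQh εM
  have hβ : β ≫ εM = mkQh := Projective.factorThru_comp _ _
  -- α ∘ d10 lands in J
  have hd0 : d10 ≫ εM = 0 := P.complex_d_comp_π_f_zero
  have hmem : ∀ v : P1, α (d10 v) ∈ J := by
    intro v
    rw [← Submodule.Quotient.mk_eq_zero J]
    have h2 : mkQh (α (d10 v)) = εM (d10 v) := LinearMap.congr_fun (congrArg ModuleCat.Hom.hom hα) (d10 v)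
    have h3 : εM (d10 v) = 0 := LinearMap.congr_fun (congrArg ModuleCat.Hom.hom hd0) v
    exact h2.trans h3
  -- the cocycle g
  let AD : P1 →ₗ[R] ↥J := LinearMap.codRestrict J (α.hom ∘ₗ d10.hom) hmem
  let g : P1 ⟶ Y := ModuleCat.ofHom (f ∘ₗ AD : P1 →ₗ[R] R)
  have hcoc : d21 ≫ g = 0 := by
    apply ModuleCat.hom_ext
    apply LinearMap.ext
    intro w
    have h4 : d10 (d21 w) = 0 := by
      calc d10 (d21 w) = (P.complex.d 2 1 ≫ P.complex.d 1 0) w := rfl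
        _ = (0 : P.complex.X 2 ⟶ P0) w := by rw [P.complex.d_comp_d 2 1 0]
        _ = 0 := rfl
    show f (AD (d21 w)) = 0
    have h5 : AD (d21 w) = 0 := by
      apply Subtype.ext
      show α (d10 (d21 w)) = 0
      rw [h4, map_zero]
    rw [h5, map_zero]
  -- homology exactness at 1
  set K := P.complex.linearYonedaObj R Y with hK
  haveI hsub : Subsingleton (((Ext R (ModuleCat R) 1).obj (Opposite.op M)).obj Y) := h1
  haveI hsub2 : Subsingleton (K.homology 1) := by
    set e := P.isoExt (R := R) 1 Y
    constructor
    intro a b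
    have ha : e.hom (e.inv a) = a := LinearMap.congr_fun (congrArg ModuleCat.Hom.hom e.inv_hom_id) a
    have hb : e.hom (e.inv b) = b := LinearMap.congr_fun (congrArg ModuleCat.Hom.hom e.inv_hom_id) b
    rw [← ha, ← hb, Subsingleton.elim (e.inv a) (e.inv b)]
  have hzero : Limits.IsZero (K.homology 1) := ModuleCat.isZero_of_subsingleton _
  have hexact : K.ExactAt 1 := (HomologicalComplex.exactAt_iff_isZero_homology K 1).mpr hzero
  have hsc : (K.sc' 0 1 2).Exact :=
    (HomologicalComplex.exactAt_iff' K 0 1 2 (by simp) (by simp)).mp hexact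
  rw [ShortComplex.moduleCat_exact_iff] at hsc
  -- g is a cocycle in K.X 1
  have hgcoc : (K.sc' 0 1 2).g g = 0 := by
    have e : (K.sc' 0 1 2).g = K.d 1 2 := rfl
    have e2 : K.d 1 2 = ModuleCat.ofHom (Linear.leftComp R Y (P.complex.d 2 1)) :=
      rfl
    rw [e, e2]
    show P.complex.d 2 1 ≫ g = 0
    exact hcoc
  obtain ⟨h, hh⟩ := hsc g hgcoc
  let h' : P0 ⟶ Y := h
  have hh' : d10 ≫ h' = g := by
    have e : (K.sc' 0 1 2).f = K.d 0 1 := rfl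
    have e2 : K.d 0 1 = ModuleCat.ofHom (Linear.leftComp R Y (P.complex.d 1 0)) :=
      rfl
    rw [e, e2] at hh
    exact hh
  -- the correction map τ : R →ₗ J
  let γ : R →ₗ[R] R := (β ≫ α : Y ⟶ Y).hom - LinearMap.id
  have hτmem : ∀ r : R, γ r ∈ J := by
    intro r
    have e0 : γ r = (show R from α (β r)) - r := rfl
    rw [e0, ← Submodule.Quotient.eq J]
    have ha : mkQh (α (β r)) = εM (β r) := LinearMap.congr_fun (congrArg ModuleCat.Hom.hom hα) (β r)
    have hb : εM (β r) = mkQh r := LinearMap.congr_fun (congrArg ModuleCat.Hom.hom hβ) r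
    exact ha.trans hb
  let τ : R →ₗ[R] ↥J := LinearMap.codRestrict J γ hτmem
  let hAsLin : R →ₗ[R] R := show R →ₗ[R] R from (β ≫ h').hom
  let G : R →ₗ[R] R := hAsLin - (f ∘ₗ τ)
  have hG : ∀ u : ↥J, f u = G (u : R) := by
    intro u
    have h6 : εM (β (u : R)) = 0 := by
      have hb : εM (β (u : R)) = mkQh (u : R) := LinearMap.congr_fun (congrArg ModuleCat.Hom.hom hβ) (u : R)
      rw [hb]
      show Submodule.Quotient.mk (u : R) = 0
      rw [Submodule.Quotient.mk_eq_zero]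
      exact u.2
    have hex := P.exact₀
    rw [ShortComplex.moduleCat_exact_iff] at hex
    obtain ⟨v, hv⟩ := hex (β (u : R)) h6
    let v' : ↑P1 := v
    have hv' : d10 v' = β (u : R) := hv
    have h7 : h' (β (u : R)) = g v' := by
      rw [← hv']
      exact LinearMap.congr_fun (congrArg ModuleCat.Hom.hom hh') v' 
    have h8 : AD v' = u + τ (u : R) := by
      apply Subtype.ext
      have e1 : ((AD v' : R)) = (show R from α (d10 v')) := rfl
      have e2 : ((u + τ (u : R) : ↥J) : R) = (u : R) + γ (u : R) := rfl
      have e3 : γ (u : R) = (show R from α (β (u : R))) - (u : R) := rfl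
      rw [e1, e2, e3, hv']
      ring
    have h9 : g v' = f u + f (τ (u : R)) := by
      show f (AD v') = _
      rw [h8, map_add]
    have hGu : G (u : R) = hAsLin (u : R) - f (τ (u : R)) := rfl
    have hA : hAsLin (u : R) = h' (β (u : R)) := rfl
    rw [hGu, hA, h7, h9]
    ring
  refine ⟨G 1, fun u => ?_⟩
  rw [hG u]
  conv_lhs => rw [show (u : R) = (u : R) • (1 : R) by rw [smul_eq_mul, mul_one]]
  rw [map_smul, smul_eq_mul]
  exact mul_comm _ _

end Aux

/-- A finitely generated GV-ideal which is flat as an `R`-module equals `R`. -/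
theorem stmt9 (R : Type u) [CommRing R] (J : Ideal R) (hJ : IsGV R J)
    (hflat : Module.Flat R J) : J = ⊤ := by
  have hJ' : J.FG ∧ Subsingleton ((R ⧸ J) →ₗ[R] R) ∧ extVanish R J 1 := hJ
  obtain ⟨hfg, hsub, hext1⟩ := hJ'
  exact main_alg J hfg (ann_zero J hsub) (fun f => hom_extends J hext1 f) hflat
end

section
/- Let R be a commutative ring with fPD(R) = 0 (a DQ ring). Then every finitely generated ideal I of R with Hom_R(R/I, R) = 0 satisfies I = R; equivalently, every finitely generated proper ideal has nonzero annihilator. -/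
universe u

open CategoryTheory

lemma fPDLE_zero_of (R : Type u) [CommRing R] (h : fPD R = 0) : fPDLE R 0 := by
  by_contra hc
  have h1 : (1 : ℕ∞) ≤ fPD R := by
    refine le_iInf fun n => le_iInf fun hn => ?_
    rcases n with _ | n
    · exact absurd hn hc
    · exact_mod_cast Nat.one_le_iff_ne_zero.mpr (Nat.succ_ne_zero n)
  rw [h] at h1
  exact absurd h1 (by simp)

lemma key (R : Type u) [CommRing R] (h0 : fPDLE R 0) (I : Ideal R) (hfg : I.FG)
    (hann : ∀ r : R, (∀ a ∈ I, a * r = 0) → r = 0) : I = ⊤ := by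
  obtain ⟨n, a, ha⟩ := Submodule.fg_iff_exists_fin_generating_family.mp hfg
  -- φ : R → Fin n → R, r ↦ fun i => r * a i
  let φ : R →ₗ[R] (Fin n → R) := LinearMap.pi fun i => LinearMap.toSpanSingleton R R (a i)
  have hφ : Function.Injective φ := by
    rw [← LinearMap.ker_eq_bot, LinearMap.ker_eq_bot']
    intro r hr
    refine hann r ?_
    intro x hx
    rw [← ha] at hx
    have : x ∈ LinearMap.ker (LinearMap.toSpanSingleton R R r) := by
      refine Submodule.span_le.mpr ?_ hx
      rintro _ ⟨i, rfl⟩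
      have := congrFun hr i
      simp only [LinearMap.pi_apply, LinearMap.toSpanSingleton_apply, Pi.zero_apply] at this
      simp [LinearMap.mem_ker, LinearMap.toSpanSingleton_apply, smul_eq_mul]
      rw [mul_comm]
      simpa [φ, smul_eq_mul, mul_comm] using this
    simpa [LinearMap.mem_ker, smul_eq_mul] using this
  set N : Submodule R (Fin n → R) := LinearMap.range φ with hN
  -- M := (Fin n → R) ⧸ N is projective
  have hM : Module.Projective R ((Fin n → R) ⧸ N) := by
    have hres : fgpdLE R 1 ((Fin n → R) ⧸ N) := by
      refine ⟨Fin n → R, inferInstance, inferInstance, N.mkQ, inferInstance, inferInstance,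
        Submodule.mkQ_surjective N, ?_⟩
      have e : R ≃ₗ[R] LinearMap.ker N.mkQ :=
        (LinearEquiv.ofInjective φ hφ).trans (LinearEquiv.ofEq _ _ (N.ker_mkQ).symm)
      exact ⟨Module.Finite.equiv e, Module.Projective.of_equiv e⟩
    exact h0 _ ⟨1, hres⟩
  -- split the quotient map: get s with mkQ ∘ s = id
  obtain ⟨s, hs⟩ := Module.projective_lifting_property (R := R) N.mkQ LinearMap.id
    (Submodule.mkQ_surjective N)
  -- retraction π : (Fin n → R) → N
  have hland : ∀ x : Fin n → R, x - s (N.mkQ x) ∈ N := by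
    intro x
    have hz : N.mkQ (x - s (N.mkQ x)) = 0 := by
      rw [map_sub, ← LinearMap.comp_apply, hs]; simp
    have := LinearMap.mem_ker.mpr hz
    rwa [N.ker_mkQ] at this
  let π : (Fin n → R) →ₗ[R] N :=
    LinearMap.codRestrict N (LinearMap.id - s ∘ₗ N.mkQ) (fun x => hland x)
  let ψ : (Fin n → R) →ₗ[R] R := (LinearEquiv.ofInjective φ hφ).symm ∘ₗ π
  have hψφ : ∀ r : R, ψ (φ r) = r := by
    intro r
    have hπ : π (φ r) = (LinearEquiv.ofInjective φ hφ) r := by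
      ext
      simp only [π, LinearMap.codRestrict_apply, LinearMap.sub_apply, LinearMap.id_apply,
        LinearMap.comp_apply]
      have : N.mkQ (φ r) = 0 := by
        rw [← LinearMap.mem_ker, N.ker_mkQ]; exact ⟨r, rfl⟩
      rw [this, map_zero, sub_zero]
      rfl
    simp [ψ, hπ]
  -- now 1 = ψ (φ 1) = ∑ a i * ψ (single i 1) ∈ I
  have h1 : (1 : R) = ψ (φ 1) := (hψφ 1).symm
  have hφ1 : φ 1 = ∑ i : Fin n, a i • (Pi.single i 1 : Fin n → R) := by
    ext j
    simp [φ, LinearMap.toSpanSingleton_apply, Pi.single_apply, Finset.sum_apply]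
  rw [hφ1, map_sum] at h1
  have : (1 : R) ∈ I := by
    rw [h1]
    refine Ideal.sum_mem I fun i _ => ?_
    rw [map_smul, smul_eq_mul]
    exact Ideal.mul_mem_right _ I (ha ▸ Submodule.subset_span ⟨i, rfl⟩)
  exact Ideal.eq_top_of_isUnit_mem I this isUnit_one

/-- If `fPD R = 0`, then every finitely generated ideal `I` with `Hom_R(R/I,R) = 0` equals `R`;
equivalently every finitely generated proper ideal has nonzero annihilator. -/
theorem stmt16 (R : Type u) [CommRing R] (h : fPD R = 0) :
    (∀ I : Ideal R, I.FG → Subsingleton ((R ⧸ I) →ₗ[R] R) → I = ⊤) ∧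
    (∀ I : Ideal R, I.FG → I ≠ ⊤ → Submodule.annihilator (I : Submodule R R) ≠ ⊥) := by
  have h0 : fPDLE R 0 := fPDLE_zero_of R h
  constructor
  · intro I hfg hsub
    refine key R h0 I hfg fun r hr => ?_
    have hle : I ≤ LinearMap.ker (LinearMap.toSpanSingleton R R r) := by
      intro a haI
      simp only [LinearMap.mem_ker, LinearMap.toSpanSingleton_apply, smul_eq_mul]
      exact hr a haI
    let f : (R ⧸ I) →ₗ[R] R := Submodule.liftQ I (LinearMap.toSpanSingleton R R r) hle
    have hf : f = 0 := Subsingleton.elim _ _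
    have : f (Submodule.Quotient.mk 1) = r := by
      rw [Submodule.liftQ_apply, LinearMap.toSpanSingleton_apply, one_smul]
    rw [hf] at this
    simpa using this.symm
  · intro I hfg hne hann
    refine hne (key R h0 I hfg fun r hr => ?_)
    have : r ∈ Submodule.annihilator (I : Submodule R R) := by
      rw [Submodule.mem_annihilator]
      intro m hm
      rw [smul_eq_mul, mul_comm]
      exact hr m hm
    rw [hann] at this
    simpa using this
end
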